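/- arXiv:1504.06837 — 2 statements merged into one kernel-verified Lean document; each statement's English description precedes it below -/
import Mathlib

section
/- Suppose Ω is partitioned into pairwise disjoint sets P_L, N_L and U with P_L ∪ N_L ∪ U = Ω. Let P_U ⊆ U be nonempty with |P_U| = m and P_L ∪ P_U ≠ Ω, let r ∈ {1, …, |Ω|}, and let T be a real number with T ≤ TPR(P_U, r). Let F = {S ⊆ U : |S| = m and TPR(S, r) ≤ T}, and suppose P*_U ∈ F attains the maximum of TPR(·, r) over F. Then for every S ∈ F, FPR(P_L ∪ S, r) ≥ FPR(P_L ∪ P*_U, r) ≥ FPR(P_L ∪ P_U, r); that is, FPR(P_L ∪ P*_U, r) is the least upper bound on FPR(P_L ∪ P_U, r) achievable by surrogate positive sets in F. -/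
/- Among sets of a fixed size, the false positive rate is antitone in the number of top-ranked
elements: the top `r` ranks split between `A` and `Aᶜ`, so every top-ranked element gained by `A`
is lost by its complement, whose size stays fixed. Since `P_L` is disjoint from the candidates in
`U`, adjoining it shifts both counts by the same amount, and the maximality of `P*_U` and
`TPR(P*_U) ≤ T ≤ TPR(P_U)` compare the top counts. -/

open Finset

variable {α : Type*} [Fintype α] [DecidableEq α]

/-- `top S r`: the elements of `S` ranked in the top `r` positions.
Ranks are 1-based: the rank of `x` is `(rk x : ℕ) + 1`, so `rank x ≤ r ↔ (rk x : ℕ) < r`. -/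
def topSet (rk : α ≃ Fin (Fintype.card α)) (S : Finset α) (r : ℕ) : Finset α :=
  S.filter fun x => ((rk x : Fin (Fintype.card α)) : ℕ) < r

/-- True positive rate of the positive set `S` at cutoff rank `r`. -/
noncomputable def TPR (rk : α ≃ Fin (Fintype.card α)) (S : Finset α) (r : ℕ) : ℝ :=
  (topSet rk S r).card / S.card

/-- False positive rate of the positive set `S` at cutoff rank `r`:
the TPR of the complement `Ω \ S`. -/
noncomputable def FPR (rk : α ≃ Fin (Fintype.card α)) (S : Finset α) (r : ℕ) : ℝ :=
  TPR rk Sᶜ r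

section TopSet

variable (rk : α ≃ Fin (Fintype.card α)) (r : ℕ)

lemma card_topSet_add_card_topSet_compl (A : Finset α) :
    #(topSet rk A r) + #(topSet rk Aᶜ r) = #(topSet rk univ r) := by
  unfold topSet
  rw [← card_union_of_disjoint (disjoint_filter_filter disjoint_compl_right), ← filter_union,
    union_compl]

lemma card_topSet_union {A B : Finset α} (h : Disjoint A B) :
    #(topSet rk (A ∪ B) r) = #(topSet rk A r) + #(topSet rk B r) := by
  rw [topSet, filter_union, card_union_of_disjoint (disjoint_filter_filter h)]
  rfl

lemma FPR_le_FPR_of_card_topSet_le {A B : Finset α} (hcard : #A = #B)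
    (h : #(topSet rk A r) ≤ #(topSet rk B r)) : FPR rk B r ≤ FPR rk A r := by
  have hcompl : #(topSet rk Bᶜ r) ≤ #(topSet rk Aᶜ r) := by
    have := card_topSet_add_card_topSet_compl rk r A
    have := card_topSet_add_card_topSet_compl rk r B
    omega
  unfold FPR TPR
  rw [card_compl, card_compl, hcard]
  gcongr

lemma FPR_union_le_of_TPR_le {P S₁ S₂ : Finset α} (h₁ : Disjoint P S₁) (h₂ : Disjoint P S₂)
    (hcard : #S₁ = #S₂) (h : TPR rk S₁ r ≤ TPR rk S₂ r) :
    FPR rk (P ∪ S₂) r ≤ FPR rk (P ∪ S₁) r := by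
  have htop : #(topSet rk S₁ r) ≤ #(topSet rk S₂ r) := by
    rcases (#S₁).eq_zero_or_pos with h₀ | hpos
    · simp [topSet, card_eq_zero.mp h₀]
    · unfold TPR at h
      rw [hcard, div_le_div_iff_of_pos_right (by exact_mod_cast hcard ▸ hpos)] at h
      exact_mod_cast h
  apply FPR_le_FPR_of_card_topSet_le
  · rw [card_union_of_disjoint h₁, card_union_of_disjoint h₂, hcard]
  · rw [card_topSet_union rk r h₁, card_topSet_union rk r h₂]
    exact Nat.add_le_add_left htop _

end TopSet

theorem stmt_9_general (rk : α ≃ Fin (Fintype.card α)) (PL U : Finset α)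
    (hPU : Disjoint PL U)
    (PU : Finset α) (hPUsub : PU ⊆ U)
    (m : ℕ) (hPUcard : PU.card = m)
    (r : ℕ)
    (T : ℝ) (hT : T ≤ TPR rk PU r)
    (Pstar : Finset α) (hstarsub : Pstar ⊆ U) (hstarcard : Pstar.card = m)
    (hstarT : TPR rk Pstar r ≤ T)
    (hmax : ∀ S : Finset α, S ⊆ U → S.card = m → TPR rk S r ≤ T →
      TPR rk S r ≤ TPR rk Pstar r) :
    ∀ S : Finset α, S ⊆ U → S.card = m → TPR rk S r ≤ T →
      FPR rk (PL ∪ S) r ≥ FPR rk (PL ∪ Pstar) r ∧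
        FPR rk (PL ∪ Pstar) r ≥ FPR rk (PL ∪ PU) r := by
  intro S hS hScard hST
  exact ⟨FPR_union_le_of_TPR_le rk r (hPU.mono_right hS) (hPU.mono_right hstarsub)
      (hScard.trans hstarcard.symm) (hmax S hS hScard hST),
    FPR_union_le_of_TPR_le rk r (hPU.mono_right hstarsub) (hPU.mono_right hPUsub)
      (hstarcard.trans hPUcard.symm) (hstarT.trans hT)⟩

theorem stmt_9 (rk : α ≃ Fin (Fintype.card α)) (PL NL U : Finset α)
    (hPN : Disjoint PL NL) (hPU : Disjoint PL U) (hNU : Disjoint NL U)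
    (hcover : PL ∪ NL ∪ U = Finset.univ)
    (PU : Finset α) (hPUsub : PU ⊆ U) (hPUne : PU.Nonempty)
    (m : ℕ) (hPUcard : PU.card = m) (hproper : PL ∪ PU ≠ Finset.univ)
    (r : ℕ) (hr1 : 1 ≤ r) (hr2 : r ≤ Fintype.card α)
    (T : ℝ) (hT : T ≤ TPR rk PU r)
    (Pstar : Finset α) (hstarsub : Pstar ⊆ U) (hstarcard : Pstar.card = m)
    (hstarT : TPR rk Pstar r ≤ T)
    (hmax : ∀ S : Finset α, S ⊆ U → S.card = m → TPR rk S r ≤ T →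
      TPR rk S r ≤ TPR rk Pstar r) :
    ∀ S : Finset α, S ⊆ U → S.card = m → TPR rk S r ≤ T →
      FPR rk (PL ∪ S) r ≥ FPR rk (PL ∪ Pstar) r ∧
        FPR rk (PL ∪ Pstar) r ≥ FPR rk (PL ∪ PU) r :=
  stmt_9_general rk PL U hPU PU hPUsub m hPUcard r T hT Pstar hstarsub hstarcard hstarT hmax
end

section
/- Let P1, P2 ⊆ Ω be nonempty subsets with |P2| < |P1| < |Ω|, let r ∈ {1, …, |Ω|}, and suppose TPR(P1, r) = TPR(P2, r) = t. If FPR(P2, r) > t, then FPR(P1, r) > FPR(P2, r). -/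
/-!
Write `n = |Ω|`, `p = |S|` and `t = TPR(S, r)`. The top `r` ranks split into `t p` positives and
`r - t p` negatives, so `FPR(S, r) = (r - t p) / (n - p) = t + (r - t n) / (n - p)`.
Hence at a fixed `t` the ranking is worse than random exactly when `r > t n`, and then the excess
`(r - t n) / (n - p)` strictly grows with `p`.
-/

open Finset

variable {α : Type*} [Fintype α] [DecidableEq α]

section Rates

variable (rk : α ≃ Fin (Fintype.card α)) (S : Finset α) {r : ℕ}

lemma card_topSet_add_card_topSet_compl_s11 (hr : r ≤ Fintype.card α) :
    (topSet rk S r).card + (topSet rk Sᶜ r).card = r := by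
  have hsplit : ∀ T : Finset α, topSet rk T r = (topSet rk univ r).filter (· ∈ T) := by
    intro T; ext; simp [topSet, and_comm]
  have huniv : (topSet rk univ r).card = r := by
    rw [topSet, ← Fintype.card_subtype]
    exact (Fintype.card_congr (rk.subtypeEquiv fun _ => Iff.rfl)).trans
      (Fintype.card_fin_lt_of_le hr)
  refine Eq.trans ?_ huniv
  rw [hsplit S, hsplit Sᶜ]
  simpa using card_filter_add_card_filter_not (s := topSet rk univ r) (· ∈ S)

lemma FPR_eq_TPR_add_div (hS : S.card < Fintype.card α) (hr : r ≤ Fintype.card α) :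
    FPR rk S r = TPR rk S r + (r - TPR rk S r * Fintype.card α) / (Fintype.card α - S.card) := by
  have hgap : (0 : ℝ) < Fintype.card α - S.card := sub_pos.mpr (by exact_mod_cast hS)
  have hpos : TPR rk S r * S.card = (topSet rk S r).card := by
    rcases S.eq_empty_or_nonempty with rfl | hne
    · simp [topSet]
    · exact div_mul_cancel₀ _ (by exact_mod_cast hne.card_pos.ne')
  have hneg : ((topSet rk Sᶜ r).card : ℝ) = r - TPR rk S r * S.card := by
    rw [hpos, eq_sub_iff_add_eq', ← Nat.cast_add, card_topSet_add_card_topSet_compl_s11 rk S hr]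
  rw [FPR, TPR, hneg, card_compl, Nat.cast_sub (card_le_univ S)]
  field_simp
  ring

end Rates

theorem stmt_11_general (rk : α ≃ Fin (Fintype.card α)) (P1 P2 : Finset α)
    (hcard : P2.card < P1.card) (hlt : P1.card < Fintype.card α)
    (r : ℕ) (hr2 : r ≤ Fintype.card α)
    (t : ℝ) (ht1 : TPR rk P1 r = t) (ht2 : TPR rk P2 r = t)
    (hfpr : FPR rk P2 r > t) :
    FPR rk P1 r > FPR rk P2 r := by
  rw [FPR_eq_TPR_add_div rk P1 hlt hr2, ht1]
  rw [FPR_eq_TPR_add_div rk P2 (hcard.trans hlt) hr2, ht2] at hfpr ⊢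
  have hgap1 : (0 : ℝ) < Fintype.card α - P1.card := sub_pos.mpr (by exact_mod_cast hlt)
  have hgap2 : (Fintype.card α : ℝ) - P1.card < Fintype.card α - P2.card :=
    sub_lt_sub_left (by exact_mod_cast hcard) _
  have hexcess : 0 < (r : ℝ) - t * Fintype.card α :=
    (div_pos_iff_of_pos_right (hgap1.trans hgap2)).mp (lt_add_iff_pos_right t |>.mp hfpr)
  exact add_lt_add_right (div_lt_div_of_pos_left hexcess hgap1 hgap2) t

theorem stmt_11 (rk : α ≃ Fin (Fintype.card α)) (P1 P2 : Finset α)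
    (h1 : P1.Nonempty) (h2 : P2.Nonempty)
    (hcard : P2.card < P1.card) (hlt : P1.card < Fintype.card α)
    (r : ℕ) (hr1 : 1 ≤ r) (hr2 : r ≤ Fintype.card α)
    (t : ℝ) (ht1 : TPR rk P1 r = t) (ht2 : TPR rk P2 r = t)
    (hfpr : FPR rk P2 r > t) :
    FPR rk P1 r > FPR rk P2 r :=
  stmt_11_general rk P1 P2 hcard hlt r hr2 t ht1 ht2 hfpr
end
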